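/- arXiv:2308.15098 — 3 statements merged into one kernel-verified Lean document; each statement's English description precedes it below -/
import Mathlib

section
/- The fast condition and slow condition are mutually exclusive: if κ > 0 and a node v satisfies both the fast condition (there exists s ∈ ℕ and a neighbor x with L_x(t) - L_v(t) ≥ (2s+1)κ, and for all neighbors y, L_y(t) - L_v(t) ≥ -(2s+1)κ) and the slow condition (there exists s' ∈ ℕ and a neighbor x' with L_{x'}(t) - L_v(t) ≤ -2s'κ, and for all neighbors y, L_y(t) - L_v(t) ≤ 2s'κ), then a contradiction follows, provided v has at least one neighbor. -/
/-- The fast condition and slow condition are mutually exclusive (κ > 0). -/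
theorem fc_sc_mutually_exclusive {V : Type*} (adj : V → V → Prop)
    (L : V → ℝ) (κ : ℝ) (hκ : 0 < κ) (v : V)
    (hneigh : ∃ w, adj v w)
    (hFC : ∃ s : ℕ, (∃ x, adj v x ∧ L x - L v ≥ (2 * (s : ℝ) + 1) * κ) ∧
      (∀ y, adj v y → L y - L v ≥ -((2 * (s : ℝ) + 1) * κ)))
    (hSC : ∃ s' : ℕ, (∃ x', adj v x' ∧ L x' - L v ≤ -(2 * (s' : ℝ) * κ)) ∧
      (∀ y, adj v y → L y - L v ≤ 2 * (s' : ℝ) * κ)) :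
    False := by
  obtain ⟨s, ⟨x, hx, hxge⟩, hFall⟩ := hFC
  obtain ⟨s', ⟨x', hx', hxle⟩, hSall⟩ := hSC
  have h1 : (2 * (s : ℝ) + 1) * κ ≤ 2 * (s' : ℝ) * κ :=
    le_trans hxge (hSall x hx)
  have h2 : -(2 * (s' : ℝ) * κ) ≥ -((2 * (s : ℝ) + 1) * κ) :=
    le_trans (hFall x' hx') hxle
  have heq : (2 * (s : ℝ) + 1) = 2 * (s' : ℝ) := by
    have h2' : 2 * (s' : ℝ) * κ ≤ (2 * (s : ℝ) + 1) * κ := by linarith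
    have := le_antisymm h1 h2'
    exact mul_right_cancel₀ (ne_of_gt hκ) this
  have : 2 * s + 1 = 2 * s' := by exact_mod_cast heq
  omega
end

section
/- If κ > 2δ, then a node v cannot simultaneously satisfy the slow condition and the fast trigger at time t. Formally: suppose for some s ∈ ℕ there is a neighbor x with L_x(t) - L_v(t) ≤ -2sκ and all neighbors y satisfy L_y(t) - L_v(t) ≤ 2sκ (slow condition), and suppose for some s' ∈ ℕ there is a neighbor x' with Ô_{x'}(t) ≥ (2s'+1)κ - δ and all neighbors y satisfy Ô_y(t) ≥ -(2s'+1)κ - δ (fast trigger). Then we derive both s' < s and s < s' + 1, a contradiction. -/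
/-- If κ > 2δ, the slow condition and the fast trigger are mutually exclusive. -/
theorem sc_ft_mutually_exclusive {V : Type*} (adj : V → V → Prop) (L : V → ℝ)
    (Ohat : V → ℝ) (κ δ : ℝ) (hδ : 0 ≤ δ) (hκ : 2 * δ < κ) (v : V)
    (hacc : ∀ w, adj v w → |Ohat w - (L w - L v)| ≤ δ)
    (hSC : ∃ s : ℕ, (∃ x, adj v x ∧ L x - L v ≤ -(2 * (s : ℝ) * κ)) ∧
      (∀ y, adj v y → L y - L v ≤ 2 * (s : ℝ) * κ))
    (hFT : ∃ s' : ℕ, (∃ x', adj v x' ∧ Ohat x' ≥ (2 * (s' : ℝ) + 1) * κ - δ) ∧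
      (∀ y, adj v y → Ohat y ≥ -((2 * (s' : ℝ) + 1) * κ) - δ)) :
    False := by
  obtain ⟨s, ⟨x, hx, hxL⟩, hall⟩ := hSC
  obtain ⟨s', ⟨x', hx', hx'O⟩, hall'⟩ := hFT
  have h1 := abs_le.mp (hacc x hx)
  have h2 := abs_le.mp (hacc x' hx')
  have h3 := hall x' hx'
  have h4 := hall' x hx
  have hκ0 : 0 < κ := lt_of_le_of_lt (by linarith) hκ
  -- s' < s
  have hlt : (s' : ℝ) < s := by nlinarith [h2.1, h2.2]
  have hlt2 : (s : ℝ) < s' + 1 := by nlinarith [h1.1, h1.2]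
  have : (s' : ℕ) < s := by exact_mod_cast hlt
  have : (s : ℕ) < s' + 1 := by exact_mod_cast (by push_cast; linarith : (s:ℝ) < (s':ℝ)+1)
  omega
end

section
/- In any spanning tree T of the W×W grid graph, there exist two grid-adjacent vertices whose distance in T is at least proportional to W; more precisely, there exist vertices u, v adjacent in the grid with d_T(u,v) ≥ c·W for some absolute constant c > 0 (e.g., c can be taken so that d_T(u,v) ≥ 2W/3 - 1 works for sufficiently large W). -/
open SimpleGraph Finset

/-- The W×W grid graph on Fin W × Fin W. -/
def gridGraph (W : ℕ) : SimpleGraph (Fin W × Fin W) :=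
  SimpleGraph.fromRel (fun u v =>
    (u.1 = v.1 ∧ (u.2 : ℕ) + 1 = (v.2 : ℕ)) ∨ (u.2 = v.2 ∧ (u.1 : ℕ) + 1 = (v.1 : ℕ)))

namespace STFGN

variable {W : ℕ}

/-- ℓ¹ distance on the grid. -/
def l1 (x y : Fin W × Fin W) : ℕ := Nat.dist x.1.1 y.1.1 + Nat.dist x.2.1 y.2.1

lemma grid_adj_l1 {x y : Fin W × Fin W} (h : (gridGraph W).Adj x y) : l1 x y ≤ 1 := by
  rcases h.2 with (⟨h1, h2⟩ | ⟨h1, h2⟩) | (⟨h1, h2⟩ | ⟨h1, h2⟩) <;>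
    simp [l1, h1, ← h2, Nat.dist_self, Nat.dist, Prod.ext_iff] <;> omega

lemma l1_triangle (x y z : Fin W × Fin W) : l1 x z ≤ l1 x y + l1 y z := by
  have h1 := Nat.dist.triangle_inequality x.1.1 y.1.1 z.1.1
  have h2 := Nat.dist.triangle_inequality x.2.1 y.2.1 z.2.1
  simp only [l1]; omega

lemma l1_le_length {x y : Fin W × Fin W} (w : (gridGraph W).Walk x y) : l1 x y ≤ w.length := by
  induction w with
  | nil => simp [l1, Nat.dist_self]
  | @cons a b c h w ih =>
    have := l1_triangle a b c
    have := grid_adj_l1 h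
    simp only [Walk.length_cons]; omega

lemma l1_le_length_T {T : SimpleGraph (Fin W × Fin W)} (hT : T ≤ gridGraph W)
    {x y : Fin W × Fin W} (w : T.Walk x y) : l1 x y ≤ w.length := by
  have := l1_le_length (w.map (Hom.ofLE hT))
  rwa [Walk.length_map] at this

variable (T : SimpleGraph (Fin W × Fin W))

/-- the vertices reaching `b` after edge `s(a,b)` is deleted. -/
noncomputable def side (a b : Fin W × Fin W) : Finset (Fin W × Fin W) :=
  (Set.toFinite {x : Fin W × Fin W | (T.deleteEdges {s(a,b)}).Reachable x b}).toFinset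

lemma mem_side {a b x : Fin W × Fin W} :
    x ∈ side T a b ↔ (T.deleteEdges {s(a,b)}).Reachable x b := by
  simp [side]

variable {T}

lemma bridge (hac : T.IsAcyclic) {a b : Fin W × Fin W} (hadj : T.Adj a b) :
    ¬(T.deleteEdges {s(a,b)}).Reachable a b :=
  isBridge_iff.mp (isAcyclic_iff_forall_adj_isBridge.mp hac hadj)

lemma reach_or_aux (a b : Fin W × Fin W) {x z : Fin W × Fin W} (w : T.Walk x z) :
    (T.deleteEdges {s(a,b)}).Reachable x a ∨ (T.deleteEdges {s(a,b)}).Reachable x b ∨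
      (T.deleteEdges {s(a,b)}).Reachable x z := by
  induction w with
  | nil => exact Or.inr (Or.inr (Reachable.refl _))
  | @cons p q r h w ih =>
    by_cases he : s(p,q) = s(a,b)
    · rw [Sym2.eq_iff] at he
      rcases he with ⟨rfl, rfl⟩ | ⟨rfl, rfl⟩
      · exact Or.inl (Reachable.refl _)
      · exact Or.inr (Or.inl (Reachable.refl _))
    · have h' : (T.deleteEdges {s(a,b)}).Adj p q := by simp [h, he]
      rcases ih with hy | hy | hy
      · exact Or.inl (h'.reachable.trans hy)
      · exact Or.inr (Or.inl (h'.reachable.trans hy))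
      · exact Or.inr (Or.inr (h'.reachable.trans hy))

lemma reach_or (a b : Fin W × Fin W) {x : Fin W × Fin W} (w : T.Walk x b) :
    (T.deleteEdges {s(a,b)}).Reachable x a ∨ (T.deleteEdges {s(a,b)}).Reachable x b := by
  rcases reach_or_aux a b w with h | h | h
  · exact Or.inl h
  · exact Or.inr h
  · exact Or.inr h

lemma mem_side_or (hconn : T.Connected) (a b : Fin W × Fin W) (x : Fin W × Fin W) :
    x ∈ side T b a ∨ x ∈ side T a b := by
  obtain ⟨w⟩ := hconn.preconnected x b
  rcases reach_or a b w with h | h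
  · left; rw [mem_side, Sym2.eq_swap]; exact h
  · right; rw [mem_side]; exact h

lemma side_disjoint (hac : T.IsAcyclic) {a b : Fin W × Fin W} (hadj : T.Adj a b) :
    Disjoint (side T a b) (side T b a) := by
  rw [Finset.disjoint_left]
  intro x hxb hxa
  rw [mem_side] at hxb hxa
  rw [Sym2.eq_swap] at hxa
  exact bridge hac hadj (hxa.symm.trans hxb)

lemma side_card_add (hconn : T.Connected) (hac : T.IsAcyclic) {a b : Fin W × Fin W}
    (hadj : T.Adj a b) : (side T a b).card + (side T b a).card = W * W := by
  have hu : side T a b ∪ side T b a = Finset.univ := by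
    ext x
    simp only [Finset.mem_union, Finset.mem_univ, iff_true]
    exact (mem_side_or hconn a b x).symm.imp id id
  have := Finset.card_union_of_disjoint (side_disjoint hac hadj)
  rw [hu] at this
  simp only [Finset.card_univ, Fintype.card_prod, Fintype.card_fin] at this
  omega

lemma cross_edge_mem (hac : T.IsAcyclic) {a b u v : Fin W × Fin W} (hadj : T.Adj a b)
    (hu : u ∈ side T b a) (hv : v ∈ side T a b) (w : T.Walk u v) : s(a,b) ∈ w.edges := by
  by_contra h
  have hw : ∀ e ∈ w.edges, e ∉ ({s(a,b)} : Set (Sym2 (Fin W × Fin W))) := by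
    intro e he
    simp only [Set.mem_singleton_iff]
    exact fun hh => h (hh ▸ he)
  have hr : (T.deleteEdges {s(a,b)}).Reachable u v := ⟨w.toDeleteEdges _ hw⟩
  rw [mem_side, Sym2.eq_swap] at hu
  rw [mem_side] at hv
  exact bridge hac hadj (hu.symm.trans (hr.trans hv))

variable (T) in
/-- the neighbors of `b` in `T` other than `a`. -/
noncomputable def nbrsNe (a b : Fin W × Fin W) : Finset (Fin W × Fin W) :=
  (Set.toFinite {c : Fin W × Fin W | T.Adj b c ∧ c ≠ a}).toFinset

lemma mem_nbrsNe {a b c : Fin W × Fin W} : c ∈ nbrsNe T a b ↔ T.Adj b c ∧ c ≠ a := by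
  simp [nbrsNe]

lemma side_cover (hac : T.IsAcyclic) {a b : Fin W × Fin W} (hadj : T.Adj a b) :
    side T a b ⊆ insert b ((nbrsNe T a b).biUnion (fun c => side T b c)) := by
  classical
  intro x hx
  rw [mem_side] at hx
  by_cases hxb : x = b
  · subst hxb; exact Finset.mem_insert_self _ _
  rw [Finset.mem_insert]
  right
  obtain ⟨w0⟩ := hx.symm
  have hpath : (w0.toPath.val).IsPath := w0.toPath.prop
  set p : (T.deleteEdges {s(a,b)}).Walk b x := w0.toPath.val with hp
  clear_value p
  cases p with
  | nil => exact absurd rfl hxb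
  | @cons _ c _ hbc q =>
    rw [Walk.cons_isPath_iff] at hpath
    obtain ⟨hqpath, hbq⟩ := hpath
    rw [SimpleGraph.deleteEdges_adj] at hbc
    have hca : c ≠ a := by
      intro hce
      subst hce
      exact hbc.2 (by rw [Sym2.eq_swap]; rfl)
    have hcmem : c ∈ nbrsNe T a b := mem_nbrsNe.mpr ⟨hbc.1, hca⟩
    -- lift q to a walk in T
    set q' : T.Walk c x := q.map (Hom.ofLE (SimpleGraph.deleteEdges_le _)) with hq'def
    have hq'edges : ∀ e ∈ q'.edges, e ∉ ({s(b,c)} : Set (Sym2 (Fin W × Fin W))) := by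
      intro e he
      simp only [Set.mem_singleton_iff]
      intro hbce
      subst hbce
      have : s(b,c) ∈ q.edges := by
        simpa [hq'def, Walk.edges_map, Hom.ofLE_apply, Sym2.map_id'] using he
      exact hbq (q.fst_mem_support_of_mem_edges this)
    refine Finset.mem_biUnion.mpr ⟨c, hcmem, ?_⟩
    rw [mem_side]
    exact ⟨(q'.toDeleteEdges _ hq'edges).reverse⟩

lemma side_subset_erase (hac : T.IsAcyclic) {a b : Fin W × Fin W} (hadj : T.Adj a b)
    {c : Fin W × Fin W} (hc : c ∈ nbrsNe T a b) :
    side T b c ⊆ (side T a b).erase b := by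
  classical
  obtain ⟨hadj_bc, hca⟩ := mem_nbrsNe.mp hc
  intro x hx
  rw [mem_side] at hx
  have hxb : x ≠ b := by
    rintro rfl
    exact bridge hac hadj_bc hx
  obtain ⟨w⟩ := hx
  have hw : ∀ e ∈ w.edges, e ≠ s(b,c) := by
    intro e he hee
    subst hee
    have h2 := w.edges_subset_edgeSet he
    rw [mem_edgeSet, SimpleGraph.deleteEdges_adj] at h2
    exact h2.2 rfl
  set w' : T.Walk x c := w.map (Hom.ofLE (SimpleGraph.deleteEdges_le _))
    with hw'def
  have hw' : ∀ e ∈ w'.edges, e ≠ s(b,c) := by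
    intro e he
    have : e ∈ w.edges := by
      simpa [hw'def, Walk.edges_map, Hom.ofLE_apply, Sym2.map_id'] using he
    exact hw e this
  refine Finset.mem_erase.mpr ⟨hxb, ?_⟩
  rw [mem_side]
  by_cases hab : s(a,b) ∈ w'.edges
  · exfalso
    have hbmem : b ∈ w'.support := w'.snd_mem_support_of_mem_edges hab
    set w'' : T.Walk b c := w'.dropUntil b hbmem with hw''def
    have hsub := w'.edges_dropUntil_subset hbmem
    have hcond : ∀ e ∈ w''.edges, e ∉ ({s(b,c)} : Set (Sym2 (Fin W × Fin W))) := by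
      intro e he
      simp only [Set.mem_singleton_iff]
      exact hw' e (hsub he)
    exact bridge hac hadj_bc ⟨w''.toDeleteEdges _ hcond⟩
  · have hcond : ∀ e ∈ w'.edges, e ∉ ({s(a,b)} : Set (Sym2 (Fin W × Fin W))) := by
      intro e he
      simp only [Set.mem_singleton_iff]
      exact fun hh => hab (hh ▸ he)
    have hreach : (T.deleteEdges {s(a,b)}).Reachable x c := ⟨w'.toDeleteEdges _ hcond⟩
    have hcb : (T.deleteEdges {s(a,b)}).Adj c b := by
      rw [SimpleGraph.deleteEdges_adj]
      refine ⟨hadj_bc.symm, ?_⟩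
      simp only [Set.mem_singleton_iff, Sym2.eq_iff]
      rintro (⟨rfl, -⟩ | ⟨rfl, rfl⟩)
      · exact hca rfl
      · exact hadj_bc.ne rfl
    exact hreach.trans hcb.reachable

lemma grid_nbrs_card (b : Fin W × Fin W) :
    ((Set.toFinite {c : Fin W × Fin W | (gridGraph W).Adj b c}).toFinset).card ≤ 4 := by
  classical
  set tgt : Finset (ℕ × ℕ) :=
    {(b.1.1, b.2.1+1), (b.1.1, b.2.1-1), (b.1.1+1, b.2.1), (b.1.1-1, b.2.1)} with htgt
  have h1 : ((Set.toFinite {c : Fin W × Fin W | (gridGraph W).Adj b c}).toFinset).card ≤ tgt.card := by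
    apply Finset.card_le_card_of_injOn (fun c => ((c.1.1 : ℕ), (c.2.1 : ℕ)))
    · intro c hc
      rw [Finset.mem_coe, Set.Finite.mem_toFinset, Set.mem_setOf_eq] at hc
      obtain ⟨-, hrel⟩ := hc
      rcases hrel with (⟨h1, h2⟩ | ⟨h1, h2⟩) | (⟨h1, h2⟩ | ⟨h1, h2⟩) <;>
        · simp only [Finset.mem_coe, htgt, Finset.mem_insert, Finset.mem_singleton, Prod.mk.injEq]
          omega
    · intro c₁ _ c₂ _ h
      simp only [Prod.mk.injEq] at h
      exact Prod.ext (Fin.val_injective h.1) (Fin.val_injective h.2)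
  refine h1.trans ?_
  refine (Finset.card_insert_le _ _).trans (Nat.succ_le_succ ?_)
  refine (Finset.card_insert_le _ _).trans (Nat.succ_le_succ ?_)
  refine (Finset.card_insert_le _ _).trans (Nat.succ_le_succ ?_)
  simp

lemma nbrsNe_card (hT : T ≤ gridGraph W) {a b : Fin W × Fin W} (hadj : T.Adj a b) :
    (nbrsNe T a b).card ≤ 3 := by
  classical
  have hsub : insert a (nbrsNe T a b) ⊆
      (Set.toFinite {c : Fin W × Fin W | (gridGraph W).Adj b c}).toFinset := by
    intro c hc
    rw [Set.Finite.mem_toFinset, Set.mem_setOf_eq]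
    rcases Finset.mem_insert.mp hc with rfl | hc
    · exact hT hadj.symm
    · exact hT (mem_nbrsNe.mp hc).1
  have hnot : a ∉ nbrsNe T a b := fun h => (mem_nbrsNe.mp h).2 rfl
  have := Finset.card_le_card hsub
  rw [Finset.card_insert_of_notMem hnot] at this
  have h4 := grid_nbrs_card (W := W) b
  omega

/-- The selected edge: both components have size ≥ (W²-2)/6. -/
lemma exists_good_edge (hT : T ≤ gridGraph W) (hconn : T.Connected) (hac : T.IsAcyclic)
    (hW : 4 ≤ W) :
    ∃ p q : Fin W × Fin W, T.Adj p q ∧ W * W ≤ 6 * (side T p q).card + 2 ∧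
      W * W ≤ 2 * (side T q p).card := by
  classical
  -- there is at least one adjacent pair
  have hx : ∃ a b : Fin W × Fin W, T.Adj a b := by
    have h0 : (0 : ℕ) < W := by omega
    have h1 : (1 : ℕ) < W := by omega
    obtain ⟨w⟩ := hconn.preconnected (⟨0, h0⟩, ⟨0, h0⟩) (⟨0, h0⟩, ⟨1, h1⟩)
    cases w with
    | cons h _ => exact ⟨_, _, h⟩
  set E : Finset ((Fin W × Fin W) × (Fin W × Fin W)) :=
    (Set.toFinite {p : (Fin W × Fin W) × (Fin W × Fin W) |
      T.Adj p.1 p.2 ∧ W * W ≤ 2 * (side T p.1 p.2).card}).toFinset with hE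
  have hmemE : ∀ p, p ∈ E ↔ T.Adj p.1 p.2 ∧ W * W ≤ 2 * (side T p.1 p.2).card := by
    intro p; simp [hE]
  have hEne : E.Nonempty := by
    obtain ⟨a, b, hab⟩ := hx
    have hsum := side_card_add hconn hac hab
    by_cases h : W * W ≤ 2 * (side T a b).card
    · exact ⟨(a, b), (hmemE _).mpr ⟨hab, h⟩⟩
    · refine ⟨(b, a), (hmemE _).mpr ⟨hab.symm, ?_⟩⟩
      show W * W ≤ 2 * (side T b a).card
      omega
  obtain ⟨⟨a, b⟩, hmem, hmin⟩ := Finset.exists_min_image E (fun p => (side T p.1 p.2).card) hEne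
  obtain ⟨hadj, hm⟩ := (hmemE _).mp hmem
  dsimp only at hadj hm
  set m := (side T a b).card with hmdef
  have hm2 : 2 ≤ m := by nlinarith
  -- sum over neighbors
  have hcover := side_cover hac hadj
  have hcard1 : m ≤ 1 + ∑ c ∈ nbrsNe T a b, (side T b c).card := by
    calc m ≤ (insert b ((nbrsNe T a b).biUnion (fun c => side T b c))).card :=
          Finset.card_le_card hcover
      _ ≤ 1 + ((nbrsNe T a b).biUnion (fun c => side T b c)).card := by
          have := Finset.card_insert_le b ((nbrsNe T a b).biUnion (fun c => side T b c))
          omega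
      _ ≤ 1 + ∑ c ∈ nbrsNe T a b, (side T b c).card :=
          Nat.add_le_add_left (Finset.card_biUnion_le) _
  -- there is a neighbor with a large side
  have hD3 : (nbrsNe T a b).card ≤ 3 := nbrsNe_card hT hadj
  have hext : ∃ c ∈ nbrsNe T a b, m ≤ 1 + 3 * (side T b c).card := by
    by_contra hno
    push_neg at hno
    have hb1 : ∀ c ∈ nbrsNe T a b, 3 * (side T b c).card ≤ m - 2 := by
      intro c hc
      have := hno c hc
      omega
    have hs : 3 * ∑ c ∈ nbrsNe T a b, (side T b c).card ≤ (nbrsNe T a b).card * (m - 2) := by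
      rw [Finset.mul_sum]
      calc ∑ c ∈ nbrsNe T a b, 3 * (side T b c).card ≤ ∑ c ∈ nbrsNe T a b, (m - 2) :=
            Finset.sum_le_sum hb1
        _ = (nbrsNe T a b).card * (m - 2) := by rw [Finset.sum_const, smul_eq_mul]
    have : (nbrsNe T a b).card * (m - 2) ≤ 3 * (m - 2) := Nat.mul_le_mul_right _ hD3
    omega
  obtain ⟨c₀, hc₀, hk⟩ := hext
  set k := (side T b c₀).card with hkdef
  have hadj_bc : T.Adj b c₀ := (mem_nbrsNe.mp hc₀).1
  -- k ≤ m - 1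
  have hkm : k ≤ m - 1 := by
    have hsub := side_subset_erase hac hadj hc₀
    have := Finset.card_le_card hsub
    rw [Finset.card_erase_of_mem ((mem_side T).mpr (Reachable.refl b))] at this
    omega
  -- minimality: 2k < W*W
  have h2k : 2 * k < W * W := by
    by_contra h
    push_neg at h
    have hmemE' : (b, c₀) ∈ E := (hmemE _).mpr ⟨hadj_bc, h⟩
    have := hmin _ hmemE'
    dsimp only at this
    omega
  have hsum2 := side_card_add hconn hac hadj_bc
  exact ⟨b, c₀, hadj_bc, by omega, by omega⟩

lemma flip_up (P : ℕ → Prop) : ∀ (d a : ℕ), P a → ¬ P (a + d) →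
    ∃ i, a ≤ i ∧ i < a + d ∧ P i ∧ ¬ P (i + 1) := by
  intro d
  induction d with
  | zero => intro a ha hna; exact absurd ha hna
  | succ d ih =>
    intro a ha hna
    by_cases h : P (a + d)
    · exact ⟨a + d, Nat.le_add_right _ _, by omega, h, by rwa [show a + d + 1 = a + (d + 1) by omega]⟩
    · obtain ⟨i, h1, h2, h3, h4⟩ := ih a ha h
      exact ⟨i, h1, by omega, h3, h4⟩

lemma flip (P : ℕ → Prop) {ja jb : ℕ} (hA : P ja) (hB : ¬ P jb) :
    ∃ i, i + 1 ≤ max ja jb ∧ ((P i ∧ ¬ P (i + 1)) ∨ (¬ P i ∧ P (i + 1))) := by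
  rcases lt_trichotomy ja jb with h | h | h
  · obtain ⟨i, h1, h2, h3, h4⟩ := flip_up P (jb - ja) ja hA (by rwa [Nat.add_sub_cancel' h.le])
    exact ⟨i, by omega, Or.inl ⟨h3, h4⟩⟩
  · exact absurd (h ▸ hA) hB
  · obtain ⟨i, h1, h2, h3, h4⟩ := flip_up (fun n => ¬ P n) (ja - jb) jb hB
      (by rw [Nat.add_sub_cancel' h.le]; exact not_not_intro hA)
    exact ⟨i, by omega, Or.inr ⟨h3, not_not.mp h4⟩⟩

lemma card_le_rows (S : Finset (Fin W × Fin W)) (K : Finset (Fin W))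
    (h : ∀ x ∈ S, x.1 ∈ K) : S.card ≤ K.card * W := by
  classical
  have hsub : S ⊆ K.biUnion (fun r => Finset.univ.filter (fun y : Fin W × Fin W => y.1 = r)) := by
    intro x hx
    exact Finset.mem_biUnion.mpr ⟨x.1, h x hx, by simp⟩
  calc S.card ≤ _ := Finset.card_le_card hsub
    _ ≤ ∑ r ∈ K, (Finset.univ.filter (fun y : Fin W × Fin W => y.1 = r)).card :=
        Finset.card_biUnion_le
    _ ≤ ∑ _r ∈ K, W := by
        refine Finset.sum_le_sum ?_
        intro r _
        have hh : (Finset.univ.filter (fun y : Fin W × Fin W => y.1 = r)).card ≤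
            (Finset.univ : Finset (Fin W)).card := by
          refine Finset.card_le_card_of_injOn (fun y : Fin W × Fin W => y.2)
            (fun y _ => Finset.mem_univ _) ?_
          intro y1 hy1 y2 hy2 hyy
          simp only [Finset.mem_coe, Finset.mem_filter] at hy1 hy2
          exact Prod.ext (hy1.2.trans hy2.2.symm) hyy
        simpa using hh
    _ = K.card * W := by rw [Finset.sum_const, smul_eq_mul]

lemma ball_card (t : ℕ) (z : ℕ) :
    ((Set.toFinite {r : Fin W | Nat.dist r.1 z ≤ t}).toFinset).card ≤ 2 * t + 1 := by
  classical
  have h1 : ((Set.toFinite {r : Fin W | Nat.dist r.1 z ≤ t}).toFinset).card ≤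
      (Finset.Ico (z - t) (z + t + 1)).card := by
    apply Finset.card_le_card_of_injOn (fun r => r.1)
    · intro r hr
      rw [Finset.mem_coe, Set.Finite.mem_toFinset, Set.mem_setOf_eq] at hr
      have hd : Nat.dist r.1 z = r.1 - z + (z - r.1) := rfl
      simp only [Finset.mem_coe, Finset.mem_Ico]
      omega
    · intro r1 _ r2 _ h
      exact Fin.val_injective h
  rw [Nat.card_Ico] at h1
  omega

lemma geom (hW : 200 ≤ W) (A B : Finset (Fin W × Fin W))
    (hpart : ∀ x, x ∈ A ↔ x ∉ B)
    (hA : W * W ≤ 7 * A.card) (hB : W * W ≤ 7 * B.card) (b₀ : Fin W × Fin W) :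
    ∃ u v, (gridGraph W).Adj u v ∧ ((u ∈ A ∧ v ∈ B) ∨ (u ∈ B ∧ v ∈ A)) ∧
      W ≤ 15 * l1 u b₀ := by
  classical
  by_contra hcon
  push_neg at hcon
  set t := W / 15 with ht
  have htW : 15 * t ≤ W := by
    rw [ht, Nat.mul_comm]
    exact Nat.div_mul_le_self W 15
  have hBofA : ∀ x, x ∉ A → x ∈ B := by
    intro x hx
    by_contra hx2
    exact hx ((hpart x).mpr hx2)
  have hAofB : ∀ x, x ∈ B → x ∉ A := fun x hx hx2 => (hpart x).mp hx2 hx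
  -- mixed rows are close to b₀'s row
  have key_row : ∀ (r jA jB : Fin W), (r, jA) ∈ A → (r, jB) ∈ B →
      Nat.dist r.1 b₀.1.1 ≤ t := by
    intro r jA jB hjA hjB
    set P : ℕ → Prop := fun j => ∃ hj : j < W, (r, (⟨j, hj⟩ : Fin W)) ∈ A with hP
    have hPA : P jA.1 := ⟨jA.2, by simpa using hjA⟩
    have hPB : ¬ P jB.1 := by
      rintro ⟨hj, hmem⟩
      exact hAofB _ hjB (by simpa using hmem)
    obtain ⟨i, hle, hca⟩ := flip P hPA hPB
    have hi1 : i + 1 < W := lt_of_le_of_lt hle (max_lt jA.2 jB.2)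
    have hi : i < W := by omega
    set u : Fin W × Fin W := (r, ⟨i, hi⟩) with hu
    set v : Fin W × Fin W := (r, ⟨i + 1, hi1⟩) with hv
    have hadj : (gridGraph W).Adj u v := by
      rw [gridGraph, SimpleGraph.fromRel_adj]
      constructor
      · simp [hu, hv, Prod.ext_iff, Fin.ext_iff]
      · left; left; exact ⟨rfl, rfl⟩
    have hcross : (u ∈ A ∧ v ∈ B) ∨ (u ∈ B ∧ v ∈ A) := by
      rcases hca with ⟨h1, h2⟩ | ⟨h1, h2⟩
      · refine Or.inl ⟨h1.2, hBofA _ ?_⟩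
        intro hvA
        exact h2 ⟨hi1, hvA⟩
      · refine Or.inr ⟨hBofA _ (fun huA => h1 ⟨hi, huA⟩), h2.2⟩
    have := hcon u v hadj hcross
    have hl1 : l1 u b₀ = Nat.dist r.1 b₀.1.1 + Nat.dist i b₀.2.1 := rfl
    have h15 : 15 * Nat.dist r.1 b₀.1.1 ≤ W := by omega
    rw [ht, Nat.le_div_iff_mul_le (by norm_num)]
    omega
  -- mixed columns are close to b₀'s column
  have key_col : ∀ (c iA iB : Fin W), (iA, c) ∈ A → (iB, c) ∈ B →
      Nat.dist c.1 b₀.2.1 ≤ t := by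
    intro c iA iB hiA hiB
    set P : ℕ → Prop := fun i => ∃ hi : i < W, ((⟨i, hi⟩ : Fin W), c) ∈ A with hP
    have hPA : P iA.1 := ⟨iA.2, by simpa using hiA⟩
    have hPB : ¬ P iB.1 := by
      rintro ⟨hj, hmem⟩
      exact hAofB _ hiB (by simpa using hmem)
    obtain ⟨i, hle, hca⟩ := flip P hPA hPB
    have hi1 : i + 1 < W := lt_of_le_of_lt hle (max_lt iA.2 iB.2)
    have hi : i < W := by omega
    set u : Fin W × Fin W := (⟨i, hi⟩, c) with hu
    set v : Fin W × Fin W := (⟨i + 1, hi1⟩, c) with hv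
    have hadj : (gridGraph W).Adj u v := by
      rw [gridGraph, SimpleGraph.fromRel_adj]
      constructor
      · simp [hu, hv, Prod.ext_iff, Fin.ext_iff]
      · left; right; exact ⟨rfl, rfl⟩
    have hcross : (u ∈ A ∧ v ∈ B) ∨ (u ∈ B ∧ v ∈ A) := by
      rcases hca with ⟨h1, h2⟩ | ⟨h1, h2⟩
      · refine Or.inl ⟨h1.2, hBofA _ ?_⟩
        intro hvA
        exact h2 ⟨hi1, hvA⟩
      · refine Or.inr ⟨hBofA _ (fun huA => h1 ⟨hi, huA⟩), h2.2⟩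
    have := hcon u v hadj hcross
    have hl1 : l1 u b₀ = Nat.dist i b₀.1.1 + Nat.dist c.1 b₀.2.1 := rfl
    have h15 : 15 * Nat.dist c.1 b₀.2.1 ≤ W := by omega
    rw [ht, Nat.le_div_iff_mul_le (by norm_num)]
    omega
  by_cases hallA : ∃ r : Fin W, ∀ j : Fin W, (r, j) ∈ A
  · by_cases hallB : ∃ r : Fin W, ∀ j : Fin W, (r, j) ∈ B
    · -- every column is mixed
      obtain ⟨rA, hrA⟩ := hallA
      obtain ⟨rB, hrB⟩ := hallB
      have hcol : ∀ c : Fin W, Nat.dist c.1 b₀.2.1 ≤ t :=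
        fun c => key_col c rA rB (hrA c) (hrB c)
      have hsub : (Finset.univ : Finset (Fin W)) ⊆
          (Set.toFinite {r : Fin W | Nat.dist r.1 b₀.2.1 ≤ t}).toFinset := by
        intro c _
        rw [Set.Finite.mem_toFinset, Set.mem_setOf_eq]
        exact hcol c
      have h1 := Finset.card_le_card hsub
      rw [Finset.card_univ, Fintype.card_fin] at h1
      have h2 := ball_card (W := W) t b₀.2.1
      omega
    · -- no all-B row : every row contains a point of A, so B is within mixed rows
      push_neg at hallB
      have hBrows : ∀ x ∈ B,
          x.1 ∈ (Set.toFinite {r : Fin W | Nat.dist r.1 b₀.1.1 ≤ t}).toFinset := by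
        intro x hx
        rw [Set.Finite.mem_toFinset, Set.mem_setOf_eq]
        obtain ⟨j, hj⟩ := hallB x.1
        have hjA : (x.1, j) ∈ A := (hpart _).mpr hj
        have hxB : (x.1, x.2) ∈ B := by rw [Prod.mk.eta]; exact hx
        exact key_row x.1 j x.2 hjA hxB
      have hcount := card_le_rows B _ hBrows
      have hball := ball_card (W := W) t b₀.1.1
      have h1 : W * W ≤ 7 * (2 * t + 1) * W := by
        calc W * W ≤ 7 * B.card := hB
          _ ≤ 7 * (((Set.toFinite {r : Fin W | Nat.dist r.1 b₀.1.1 ≤ t}).toFinset).card * W) :=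
              Nat.mul_le_mul_left _ hcount
          _ ≤ 7 * ((2 * t + 1) * W) := Nat.mul_le_mul_left _ (Nat.mul_le_mul_right _ hball)
          _ = 7 * (2 * t + 1) * W := by ring
      have h2 : W ≤ 7 * (2 * t + 1) := Nat.le_of_mul_le_mul_right h1 (by omega)
      omega
  · -- no all-A row : every row contains a point of B, so A is within mixed rows
    push_neg at hallA
    have hArows : ∀ x ∈ A,
        x.1 ∈ (Set.toFinite {r : Fin W | Nat.dist r.1 b₀.1.1 ≤ t}).toFinset := by
      intro x hx
      rw [Set.Finite.mem_toFinset, Set.mem_setOf_eq]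
      obtain ⟨j, hj⟩ := hallA x.1
      have hjB : (x.1, j) ∈ B := hBofA _ hj
      have hxA : (x.1, x.2) ∈ A := by rw [Prod.mk.eta]; exact hx
      exact key_row x.1 x.2 j hxA hjB
    have hcount := card_le_rows A _ hArows
    have hball := ball_card (W := W) t b₀.1.1
    have h1 : W * W ≤ 7 * (2 * t + 1) * W := by
      calc W * W ≤ 7 * A.card := hA
        _ ≤ 7 * (((Set.toFinite {r : Fin W | Nat.dist r.1 b₀.1.1 ≤ t}).toFinset).card * W) :=
            Nat.mul_le_mul_left _ hcount
        _ ≤ 7 * ((2 * t + 1) * W) := Nat.mul_le_mul_left _ (Nat.mul_le_mul_right _ hball)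
        _ = 7 * (2 * t + 1) * W := by ring
    have h2 : W ≤ 7 * (2 * t + 1) := Nat.le_of_mul_le_mul_right h1 (by omega)
    omega

end STFGN

open STFGN in
/-- In any spanning tree of the W×W grid there are two grid-adjacent vertices at tree
distance at least c·W, for an absolute constant c > 0, for all sufficiently large W. -/
theorem spanning_tree_far_grid_neighbors :
    ∃ c : ℝ, 0 < c ∧ ∃ W₀ : ℕ, ∀ W : ℕ, W₀ ≤ W →
      ∀ T : SimpleGraph (Fin W × Fin W),
        T ≤ gridGraph W → T.Connected → T.IsAcyclic →
        ∃ u v : Fin W × Fin W, (gridGraph W).Adj u v ∧ c * W ≤ (T.dist u v : ℝ) := by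
  classical
  refine ⟨1/15, by norm_num, 200, ?_⟩
  intro W hW T hT hconn hac
  obtain ⟨p, q, hadj, h1, h2⟩ := exists_good_edge hT hconn hac (by omega)
  have hWW : 40000 ≤ W * W := Nat.mul_le_mul hW hW
  have hpart : ∀ x, x ∈ side T q p ↔ x ∉ side T p q := by
    intro x
    constructor
    · intro hx hx2
      exact (Finset.disjoint_left.mp (side_disjoint hac hadj)) hx2 hx
    · intro hx
      rcases mem_side_or hconn p q x with h | h
      · exact h
      · exact absurd h hx
  obtain ⟨u, v, hadjuv, hcross, hfar⟩ := geom (by omega) (side T q p) (side T p q) hpart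
    (by omega) (by omega) p
  -- every T-walk between the two sides passes through p
  obtain ⟨w, hwlen⟩ := hconn.exists_walk_length_eq_dist u v
  have hedge : s(p,q) ∈ w.edges := by
    rcases hcross with ⟨hu, hv⟩ | ⟨hu, hv⟩
    · exact cross_edge_mem hac hadj hu hv w
    · have := cross_edge_mem hac hadj hv hu w.reverse
      rwa [Walk.edges_reverse, List.mem_reverse] at this
  have hp : p ∈ w.support := w.fst_mem_support_of_mem_edges hedge
  have hl1 : l1 u p ≤ T.dist u v := by
    calc l1 u p ≤ (w.takeUntil p hp).length := l1_le_length_T hT _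
      _ ≤ w.length := Walk.length_takeUntil_le w hp
      _ = T.dist u v := hwlen
  refine ⟨u, v, hadjuv, ?_⟩
  have hfin : W ≤ 15 * T.dist u v := le_trans hfar (by omega)
  have hcast : (W : ℝ) ≤ 15 * (T.dist u v : ℝ) := by exact_mod_cast hfin
  linarith
end
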